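/- Let n units have potential treatment indicators W_i(0), W_i(1) ∈ {0,1} and potential outcomes Y_i(0), Y_i(1) ∈ ℝ. Assume (monotonicity) W_i(1) ≥ W_i(0) for all i, (existence of a complier) W_j(1) > W_j(0) for some j, and (exclusion restriction) Y_i(1) = Y_i(0) whenever W_i(1) = W_i(0). Then, letting n_co = #{i : W_i(1) - W_i(0) = 1}, τ_W = (1/n)∑_i (W_i(1)-W_i(0)) and τ_Y = (1/n)∑_i (Y_i(1)-Y_i(0)), the complier average causal effect τ_CACE = (1/n_co) ∑_{i : W_i(1)-W_i(0)=1} (Y_i(1)-Y_i(0)) satisfies τ_CACE = τ_Y / τ_W. -/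

import Mathlib

/-!
Under monotonicity and binary take-up, every unit is either a complier (`W1 - W0 = 1`) or has
`W1 = W0`; by the exclusion restriction the latter contribute nothing to `∑ (Y1 - Y0)`. So the
total intention-to-treat effect on `Y` is the total effect over compliers, while the total effect
on `W` is their number. The common factor `1 / n` cancels in the ratio.
-/

open Finset

variable {ι : Type*}

lemma sub_eq_one_or_eq_of_le {a b : ℝ} (ha : a = 0 ∨ a = 1) (hb : b = 0 ∨ b = 1) (hab : a ≤ b) :
    b - a = 1 ∨ b = a := by
  rcases ha with rfl | rfl <;> rcases hb with rfl | rfl <;> norm_num at *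

section Compliers

variable (s : Finset ι) {W0 W1 : ι → ℝ} (hdich : ∀ i, W1 i - W0 i = 1 ∨ W1 i = W0 i)
include hdich

lemma sum_filter_compliers_eq_sum {Y0 Y1 : ι → ℝ} (hexcl : ∀ i, W1 i = W0 i → Y1 i = Y0 i) :
    ∑ i ∈ s with W1 i - W0 i = 1, (Y1 i - Y0 i) = ∑ i ∈ s, (Y1 i - Y0 i) := by
  refine sum_filter_of_ne fun i _ hY => (hdich i).resolve_right fun hW => ?_
  exact hY (sub_eq_zero.mpr (hexcl i hW))

lemma sum_sub_eq_card_compliers :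
    ∑ i ∈ s, (W1 i - W0 i) = #{i ∈ s | W1 i - W0 i = 1} := by
  rw [← sum_filter_of_ne fun i _ hW => (hdich i).resolve_right fun h => hW (sub_eq_zero.mpr h),
    sum_congr rfl fun i hi => (mem_filter.mp hi).2, sum_const, nsmul_one]

end Compliers

theorem sample_CACE_eq_ratio_general (n : ℕ)
    (W0 W1 Y0 Y1 : Fin n → ℝ)
    (hW0 : ∀ i, W0 i = 0 ∨ W0 i = 1) (hW1 : ∀ i, W1 i = 0 ∨ W1 i = 1)
    (hmono : ∀ i, W0 i ≤ W1 i)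
    (hexcl : ∀ i, W1 i = W0 i → Y1 i = Y0 i) :
    (∑ i ∈ Finset.univ.filter (fun i => W1 i - W0 i = 1), (Y1 i - Y0 i)) /
      ((Finset.univ.filter (fun i => W1 i - W0 i = 1)).card : ℝ)
      = ((∑ i, (Y1 i - Y0 i)) / (n : ℝ)) / ((∑ i, (W1 i - W0 i)) / (n : ℝ)) := by
  obtain rfl | hn := n.eq_zero_or_pos
  · simp
  have hdich i : W1 i - W0 i = 1 ∨ W1 i = W0 i := sub_eq_one_or_eq_of_le (hW0 i) (hW1 i) (hmono i)
  rw [div_div_div_cancel_right₀ (Nat.cast_ne_zero.mpr hn.ne'),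
    sum_filter_compliers_eq_sum univ hdich hexcl, sum_sub_eq_card_compliers univ hdich]

/-- the sample CACE equals τ_Y / τ_W. -/
theorem sample_CACE_eq_ratio (n : ℕ) (hn : 0 < n)
    (W0 W1 Y0 Y1 : Fin n → ℝ)
    (hW0 : ∀ i, W0 i = 0 ∨ W0 i = 1) (hW1 : ∀ i, W1 i = 0 ∨ W1 i = 1)
    (hmono : ∀ i, W0 i ≤ W1 i)
    (hco : ∃ j, W0 j < W1 j)
    (hexcl : ∀ i, W1 i = W0 i → Y1 i = Y0 i) :
    (∑ i ∈ Finset.univ.filter (fun i => W1 i - W0 i = 1), (Y1 i - Y0 i)) /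
      ((Finset.univ.filter (fun i => W1 i - W0 i = 1)).card : ℝ)
      = ((∑ i, (Y1 i - Y0 i)) / (n : ℝ)) / ((∑ i, (W1 i - W0 i)) / (n : ℝ)) :=
  sample_CACE_eq_ratio_general n W0 W1 Y0 Y1 hW0 hW1 hmono hexcl
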